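/- arXiv:1006.3583 — 3 statements merged into one kernel-verified Lean document; each statement's English description precedes it below -/
import Mathlib

section
/- Let $p \ge 2$ be an integer, let $\mathcal{T}$ be the $(p+1)$-regular tree with a base vertex $x_0$, and let $T_p$ be the normalized adjacency operator $(T_p f)(x) = p^{-1/2}\sum_{y \sim x} f(y)$ acting on finitely supported real-valued functions on the vertices of $\mathcal{T}$. Let $\delta_0$ be the function equal to $1$ at $x_0$ and $0$ elsewhere, and for a vertex $x$ write $|x|$ for the graph distance from $x_0$ to $x$. Then for every even $n \ge 2$ and every vertex $x$: $P_n[\tfrac{1}{2}T_p]\,\delta_0(x) = 0$ if $|x|$ is odd or $|x| > n$; $P_n[\tfrac{1}{2}T_p]\,\delta_0(x) = \tfrac{1-p}{2\,p^{n/2}}$ if $|x| < n$ and $|x|$ is even; and $P_n[\tfrac{1}{2}T_p]\,\delta_0(x) = \tfrac{1}{2\,p^{n/2}}$ if $|x| = n$. -/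
open SimpleGraph

section TreeAux

variable {V : Type*} {G : SimpleGraph V}
open scoped Classical

open SimpleGraph

variable {V : Type*} {G : SimpleGraph V}
open scoped Classical

lemma dist_add_dist_le_of_mem_support [DecidableEq V] {u v y : V} (w : G.Walk u v)
    (h : y ∈ w.support) : G.dist u y + G.dist y v ≤ w.length := by
  have hspec := w.take_spec h
  have hlen : (w.takeUntil y h).length + (w.dropUntil y h).length = w.length := by
    rw [← Walk.length_append, hspec]
  calc G.dist u y + G.dist y v
      ≤ (w.takeUntil y h).length + (w.dropUntil y h).length :=
        Nat.add_le_add (dist_le _) (dist_le _)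
    _ = w.length := hlen

lemma neighbor_dist (htree : G.IsTree) (x0 x y : V) (hadj : G.Adj x y) :
    G.dist x0 y + 1 = G.dist x0 x ∨ G.dist x0 y = G.dist x0 x + 1 := by
  have hconn := htree.isConnected
  have hxy : G.dist x y = 1 := dist_eq_one_iff_adj.2 hadj
  have hyx : G.dist y x = 1 := by rw [dist_comm]; exact hxy
  have h1 : G.dist x0 y ≤ G.dist x0 x + 1 := by
    have := hconn.dist_triangle (u := x0) (v := x) (w := y); omega
  have h2 : G.dist x0 x ≤ G.dist x0 y + 1 := by
    have := hconn.dist_triangle (u := x0) (v := y) (w := x); omega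
  by_contra hcon
  push_neg at hcon
  have heq : G.dist x0 y = G.dist x0 x := by omega
  -- derive contradiction: unique paths
  obtain ⟨P, hP, hPlen⟩ := hconn.exists_path_of_dist x0 x
  obtain ⟨Q, hQ, hQlen⟩ := hconn.exists_path_of_dist x0 y
  have hynotin : y ∉ P.support := by
    intro hmem
    have := dist_add_dist_le_of_mem_support P hmem
    omega
  have hpath : (P.concat hadj).IsPath := by
    rw [← Walk.isPath_reverse_iff, Walk.reverse_concat, Walk.cons_isPath_iff]
    refine ⟨Walk.isPath_reverse_iff _ |>.2 hP, ?_⟩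
    simpa using hynotin
  have := (htree.existsUnique_path x0 y).unique hpath hQ
  have : (P.concat hadj).length = Q.length := by rw [this]
  rw [Walk.length_concat] at this
  omega

lemma exists_unique_pred (htree : G.IsTree) (x0 x : V) (hx : x ≠ x0) :
    ∃! y : V, G.Adj x y ∧ G.dist x0 y + 1 = G.dist x0 x := by
  have hconn := htree.isConnected
  have hdpos : 0 < G.dist x0 x := hconn.pos_dist_of_ne (Ne.symm hx)
  obtain ⟨P, hP, hPlen⟩ := hconn.exists_path_of_dist x0 x
  -- existence via reverse cons decomposition
  obtain ⟨y, hadj, q, hq⟩ := Walk.exists_eq_cons_of_ne hx P.reverse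
  have hqlen : q.length = G.dist x0 x - 1 := by
    have := congrArg Walk.length hq
    simp [Walk.length_reverse] at this
    omega
  have hydist : G.dist x0 y + 1 = G.dist x0 x := by
    have h1 : G.dist x0 y ≤ G.dist x0 x - 1 := by
      have := dist_le q.reverse
      simpa [Walk.length_reverse, hqlen, dist_comm] using this
    rcases neighbor_dist htree x0 x y hadj with h | h
    · exact h
    · omega
  refine ⟨y, ⟨hadj, hydist⟩, ?_⟩
  rintro z ⟨hzadj, hzdist⟩
  -- uniqueness
  by_contra hne
  obtain ⟨Qy, hQy, hQylen⟩ := hconn.exists_path_of_dist x0 y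
  obtain ⟨Qz, hQz, hQzlen⟩ := hconn.exists_path_of_dist x0 z
  have hxy : x ∉ Qy.support := fun hmem => by
    have := dist_add_dist_le_of_mem_support Qy hmem
    have : G.dist x0 x ≤ Qy.length := le_trans (Nat.le_add_right _ _) this
    omega
  have hxz : x ∉ Qz.support := fun hmem => by
    have := dist_add_dist_le_of_mem_support Qz hmem
    have : G.dist x0 x ≤ Qz.length := le_trans (Nat.le_add_right _ _) this
    omega
  have hpy : (Qy.concat hadj.symm).IsPath := by
    rw [← Walk.isPath_reverse_iff, Walk.reverse_concat, Walk.cons_isPath_iff]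
    exact ⟨Walk.isPath_reverse_iff _ |>.2 hQy, by simpa using hxy⟩
  have hpz : (Qz.concat hzadj.symm).IsPath := by
    rw [← Walk.isPath_reverse_iff, Walk.reverse_concat, Walk.cons_isPath_iff]
    exact ⟨Walk.isPath_reverse_iff _ |>.2 hQz, by simpa using hxz⟩
  have heq := (htree.existsUnique_path x0 x).unique hpy hpz
  have hsup := congrArg (fun w => w.reverse.support) heq
  simp only [Walk.reverse_concat, Walk.support_cons] at hsup
  rw [Qy.reverse.support_eq_cons, Qz.reverse.support_eq_cons] at hsup
  simp at hsup
  exact hne hsup.1.symm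

lemma radial_sum {p : ℕ} [∀ v : V, Fintype (G.neighborSet v)]
    (htree : G.IsTree) (hreg : G.IsRegularOfDegree (p + 1)) (x0 x : V)
    (f : V → ℝ) (g : ℕ → ℝ) (hf : ∀ y, f y = g (G.dist x0 y)) :
    ∑ y ∈ G.neighborFinset x, f y =
      if x = x0 then ((p : ℝ) + 1) * g 1
      else g (G.dist x0 x - 1) + (p : ℝ) * g (G.dist x0 x + 1) := by
  have hcard : (G.neighborFinset x).card = p + 1 := hreg x
  by_cases hx : x = x0
  · subst hx
    rw [if_pos rfl]
    have : ∀ y ∈ G.neighborFinset x, f y = g 1 := by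
      intro y hy
      rw [SimpleGraph.mem_neighborFinset] at hy
      rw [hf y, SimpleGraph.dist_eq_one_iff_adj.2 hy]
    rw [Finset.sum_congr rfl this, Finset.sum_const, hcard, nsmul_eq_mul]
    push_cast; ring
  · rw [if_neg hx]
    have hdpos : 0 < G.dist x0 x := htree.isConnected.pos_dist_of_ne (fun h => hx h.symm)
    obtain ⟨y₀, ⟨hy₀adj, hy₀dist⟩, hy₀uniq⟩ := exists_unique_pred htree x0 x hx
    have hy₀mem : y₀ ∈ G.neighborFinset x := (SimpleGraph.mem_neighborFinset _ _ _).2 hy₀adj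
    rw [← Finset.add_sum_erase _ f hy₀mem]
    have hfy₀ : f y₀ = g (G.dist x0 x - 1) := by
      rw [hf y₀]; congr 1; omega
    have hrest : ∀ y ∈ (G.neighborFinset x).erase y₀, f y = g (G.dist x0 x + 1) := by
      intro y hy
      obtain ⟨hyne, hymem⟩ := Finset.mem_erase.1 hy
      rw [SimpleGraph.mem_neighborFinset] at hymem
      rcases neighbor_dist htree x0 x y hymem with h | h
      · exact absurd (hy₀uniq y ⟨hymem, h⟩) hyne
      · rw [hf y, h]
    rw [Finset.sum_congr rfl hrest, Finset.sum_const, Finset.card_erase_of_mem hy₀mem,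
      hcard, hfy₀]
    simp only [Nat.add_sub_cancel, nsmul_eq_mul]

end TreeAux

noncomputable def gfun (p n d : ℕ) : ℝ :=
  if n = 0 then (if d = 0 then 1 else 0)
  else if d % 2 ≠ n % 2 ∨ n < d then 0
  else if d = n then 1 / (2 * Real.sqrt p ^ n)
  else (1 - (p : ℝ)) / (2 * Real.sqrt p ^ n)

lemma gfun_rec (p : ℕ) (hp : 2 ≤ p) (n d : ℕ) :
    gfun p (n + 2) d =
      (Real.sqrt p)⁻¹ * (if d = 0 then ((p : ℝ) + 1) * gfun p (n + 1) 1
        else gfun p (n + 1) (d - 1) + p * gfun p (n + 1) (d + 1)) - gfun p n d := by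
  have hppos : (0 : ℝ) < p := by positivity
  have hq0 : 0 < Real.sqrt p := Real.sqrt_pos.2 hppos
  have hq2 : Real.sqrt p ^ 2 = p := Real.sq_sqrt hppos.le
  set q := Real.sqrt p with hqdef
  have hqne : q ≠ 0 := hq0.ne'
  have hqn : ∀ m : ℕ, q ^ m ≠ 0 := fun m => pow_ne_zero m hqne
  rcases Nat.eq_zero_or_pos d with hd | hd
  · subst hd
    rw [if_pos rfl]
    rcases Nat.eq_zero_or_pos n with hn | hn
    · subst hn
      simp only [gfun, ← hqdef]
      norm_num
      rw [← hq2]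
      field_simp
      ring
    · rcases Nat.even_or_odd n with he | ho
      · -- n even ≥ 2
        have h1 : gfun p (n+2) 0 = (1 - (p:ℝ)) / (2 * q ^ (n+2)) := by
          have : ¬(0 % 2 ≠ (n+2) % 2 ∨ n + 2 < 0) := by
            rcases he with ⟨k, hk⟩; omega
          simp only [gfun, ← hqdef, if_neg (by omega : ¬ n + 2 = 0), if_neg this,
            if_neg (by omega : ¬ (0 : ℕ) = n + 2)]
        have h2 : gfun p (n+1) 1 = (1 - (p:ℝ)) / (2 * q ^ (n+1)) := by
          have : ¬(1 % 2 ≠ (n+1) % 2 ∨ n + 1 < 1) := by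
            rcases he with ⟨k, hk⟩; omega
          simp only [gfun, ← hqdef, if_neg (by omega : ¬ n + 1 = 0), if_neg this,
            if_neg (by omega : ¬ (1 : ℕ) = n + 1)]
        have h3 : gfun p n 0 = (1 - (p:ℝ)) / (2 * q ^ n) := by
          have : ¬(0 % 2 ≠ n % 2 ∨ n < 0) := by
            rcases he with ⟨k, hk⟩; omega
          simp only [gfun, ← hqdef, if_neg (by omega : ¬ n = 0), if_neg this,
            if_neg (by omega : ¬ (0 : ℕ) = n)]
        rw [h1, h2, h3, ← hq2]
        field_simp
        ring
      · -- n odd : everything 0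
        have h1 : gfun p (n+2) 0 = 0 := by
          rw [gfun, if_neg (by omega : ¬ n + 2 = 0), if_pos]
          left; rcases ho with ⟨k, hk⟩; omega
        have h2 : gfun p (n+1) 1 = 0 := by
          rw [gfun, if_neg (by omega : ¬ n + 1 = 0), if_pos]
          left; rcases ho with ⟨k, hk⟩; omega
        have h3 : gfun p n 0 = 0 := by
          rw [gfun, if_neg (by omega : ¬ n = 0), if_pos]
          left; rcases ho with ⟨k, hk⟩; omega
        rw [h1, h2, h3]; ring
  · rw [if_neg (by omega : ¬ d = 0)]
    by_cases hpar : d % 2 = n % 2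
    · rcases lt_trichotomy d (n + 2) with hlt | heq | hgt
      · rcases eq_or_lt_of_le (by omega : d ≤ n) with heqn | hltn
        · -- d = n ≥ 1
          subst heqn
          have h1 : gfun p (d+2) d = (1 - (p:ℝ)) / (2 * q ^ (d+2)) := by
            simp only [gfun, ← hqdef, if_neg (by omega : ¬ d + 2 = 0),
              if_neg (by omega : ¬(d % 2 ≠ (d+2) % 2 ∨ d + 2 < d)),
              if_neg (by omega : ¬ d = d + 2)]
          have h2 : gfun p (d+1) (d-1) = (1 - (p:ℝ)) / (2 * q ^ (d+1)) := by
            simp only [gfun, ← hqdef, if_neg (by omega : ¬ d + 1 = 0),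
              if_neg (by omega : ¬((d-1) % 2 ≠ (d+1) % 2 ∨ d + 1 < d - 1)),
              if_neg (by omega : ¬ d - 1 = d + 1)]
          have h3 : gfun p (d+1) (d+1) = 1 / (2 * q ^ (d+1)) := by
            simp only [gfun, ← hqdef, if_neg (by omega : ¬ d + 1 = 0),
              if_neg (by omega : ¬((d+1) % 2 ≠ (d+1) % 2 ∨ d + 1 < d + 1)), if_pos rfl, if_true]
          have h4 : gfun p d d = 1 / (2 * q ^ d) := by
            simp only [gfun, ← hqdef, if_neg (by omega : ¬ d = 0),
              if_neg (by omega : ¬(d % 2 ≠ d % 2 ∨ d < d)), if_pos rfl, if_true]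
          rw [h1, h2, h3, h4, ← hq2]
          field_simp
          ring
        · -- 1 ≤ d < n, parity match so d ≤ n - 2
          have hd2 : d + 2 ≤ n := by omega
          have h1 : gfun p (n+2) d = (1 - (p:ℝ)) / (2 * q ^ (n+2)) := by
            simp only [gfun, ← hqdef, if_neg (by omega : ¬ n + 2 = 0),
              if_neg (by omega : ¬(d % 2 ≠ (n+2) % 2 ∨ n + 2 < d)),
              if_neg (by omega : ¬ d = n + 2)]
          have h2 : gfun p (n+1) (d-1) = (1 - (p:ℝ)) / (2 * q ^ (n+1)) := by
            simp only [gfun, ← hqdef, if_neg (by omega : ¬ n + 1 = 0),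
              if_neg (by omega : ¬((d-1) % 2 ≠ (n+1) % 2 ∨ n + 1 < d - 1)),
              if_neg (by omega : ¬ d - 1 = n + 1)]
          have h3 : gfun p (n+1) (d+1) = (1 - (p:ℝ)) / (2 * q ^ (n+1)) := by
            simp only [gfun, ← hqdef, if_neg (by omega : ¬ n + 1 = 0),
              if_neg (by omega : ¬((d+1) % 2 ≠ (n+1) % 2 ∨ n + 1 < d + 1)),
              if_neg (by omega : ¬ d + 1 = n + 1)]
          have h4 : gfun p n d = (1 - (p:ℝ)) / (2 * q ^ n) := by
            simp only [gfun, ← hqdef, if_neg (by omega : ¬ n = 0),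
              if_neg (by omega : ¬(d % 2 ≠ n % 2 ∨ n < d)),
              if_neg (by omega : ¬ d = n)]
          rw [h1, h2, h3, h4, ← hq2]
          field_simp
          ring
      · -- d = n + 2
        subst heq
        have h1 : gfun p (n+2) (n+2) = 1 / (2 * q ^ (n+2)) := by
          simp only [gfun, ← hqdef, if_neg (by omega : ¬ n + 2 = 0),
            if_neg (by omega : ¬((n+2) % 2 ≠ (n+2) % 2 ∨ n + 2 < n + 2)), if_pos rfl, if_true]
        have h2 : gfun p (n+1) (n+2-1) = 1 / (2 * q ^ (n+1)) := by
          have : n + 2 - 1 = n + 1 := by omega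
          rw [this]
          simp only [gfun, ← hqdef, if_neg (by omega : ¬ n + 1 = 0),
            if_neg (by omega : ¬((n+1) % 2 ≠ (n+1) % 2 ∨ n + 1 < n + 1)), if_pos rfl, if_true]
        have h3 : gfun p (n+1) (n+2+1) = 0 := by
          rw [gfun, if_neg (by omega : ¬ n + 1 = 0), if_pos (by omega)]
        have h4 : gfun p n (n+2) = 0 := by
          rcases Nat.eq_zero_or_pos n with hn | hn
          · subst hn; simp [gfun]
          · rw [gfun, if_neg (by omega : ¬ n = 0), if_pos (by omega)]
        rw [h1, h2, h3, h4, ← hq2]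
        field_simp
        ring
      · -- d > n + 2 : all zero
        have h1 : gfun p (n+2) d = 0 := by
          rw [gfun, if_neg (by omega : ¬ n + 2 = 0), if_pos (by omega)]
        have h2 : gfun p (n+1) (d-1) = 0 := by
          rw [gfun, if_neg (by omega : ¬ n + 1 = 0), if_pos (by omega)]
        have h3 : gfun p (n+1) (d+1) = 0 := by
          rw [gfun, if_neg (by omega : ¬ n + 1 = 0), if_pos (by omega)]
        have h4 : gfun p n d = 0 := by
          rcases Nat.eq_zero_or_pos n with hn | hn
          · subst hn; simp [gfun]; omega
          · rw [gfun, if_neg (by omega : ¬ n = 0), if_pos (by omega)]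
        rw [h1, h2, h3, h4]; ring
    · -- parity mismatch : all zero
      have h1 : gfun p (n+2) d = 0 := by
        rw [gfun, if_neg (by omega : ¬ n + 2 = 0), if_pos (by omega)]
      have h2 : gfun p (n+1) (d-1) = 0 := by
        rw [gfun, if_neg (by omega : ¬ n + 1 = 0), if_pos (by omega)]
      have h3 : gfun p (n+1) (d+1) = 0 := by
        rw [gfun, if_neg (by omega : ¬ n + 1 = 0), if_pos (by omega)]
      have h4 : gfun p n d = 0 := by
        rcases Nat.eq_zero_or_pos n with hn | hn
        · subst hn; simp [gfun]; omega
        · rw [gfun, if_neg (by omega : ¬ n = 0), if_pos (by omega)]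
      rw [h1, h2, h3, h4]; ring

/-- **Propagation Lemma on the `(p+1)`-regular tree.**
Let `G` be the `(p+1)`-regular tree with base vertex `x0`, `S = T_p` the normalized
adjacency operator `(T_p f)(x) = p^{-1/2} ∑_{y ~ x} f(y)` on finitely supported functions,
and `δ0` the delta function at `x0`.  Then for every even `n ≥ 2` and every vertex `x`
(writing `|x|` for the graph distance from `x0` to `x`):
`P_n[½T_p]δ0(x) = 0` if `|x|` is odd or `|x| > n`;
`P_n[½T_p]δ0(x) = (1-p)/(2 p^{n/2})` if `|x| < n` is even; and
`P_n[½T_p]δ0(x) = 1/(2 p^{n/2})` if `|x| = n`. -/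
theorem chebyshev_propagation_on_regular_tree
    {V : Type*} (p : ℕ) (hp : 2 ≤ p)
    (G : SimpleGraph V) [∀ v : V, Fintype (G.neighborSet v)]
    (htree : G.IsTree) (hreg : G.IsRegularOfDegree (p + 1))
    (x0 : V)
    (S : Module.End ℝ (V →₀ ℝ))
    (hS : ∀ (f : V →₀ ℝ) (x : V),
      S f x = (Real.sqrt p)⁻¹ * ∑ y ∈ G.neighborFinset x, f y)
    (δ0 : V →₀ ℝ) (hδ0 : δ0 = Finsupp.single x0 1)
    (n : ℕ) (hn : 2 ≤ n) (hneven : Even n) (x : V) :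
    (Odd (G.dist x0 x) ∨ n < G.dist x0 x →
      ((Polynomial.aeval ((2⁻¹ : ℝ) • S)) (Polynomial.Chebyshev.T ℝ n)) δ0 x = 0)
    ∧ (G.dist x0 x < n ∧ Even (G.dist x0 x) →
      ((Polynomial.aeval ((2⁻¹ : ℝ) • S)) (Polynomial.Chebyshev.T ℝ n)) δ0 x
        = (1 - p) / (2 * (p : ℝ) ^ (n / 2)))
    ∧ (G.dist x0 x = n →
      ((Polynomial.aeval ((2⁻¹ : ℝ) • S)) (Polynomial.Chebyshev.T ℝ n)) δ0 x
        = 1 / (2 * (p : ℝ) ^ (n / 2))) := by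
  classical
  have hconn := htree.isConnected
  have hppos : (0 : ℝ) < p := by positivity
  have hq0 : 0 < Real.sqrt p := Real.sqrt_pos.2 hppos
  have hq2 : Real.sqrt p ^ 2 = (p : ℝ) := Real.sq_sqrt hppos.le
  set A : Module.End ℝ (V →₀ ℝ) := (2⁻¹ : ℝ) • S with hA
  have h2A : (2 : Module.End ℝ (V →₀ ℝ)) * A = S := by
    ext f v
    simp [hA, Module.End.mul_apply]
  have key : ∀ k : ℕ, (Polynomial.aeval A (Polynomial.Chebyshev.T ℝ ((k : ℕ) + 2 : ℕ))) δ0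
      = S ((Polynomial.aeval A (Polynomial.Chebyshev.T ℝ ((k : ℕ) + 1 : ℕ))) δ0)
        - (Polynomial.aeval A (Polynomial.Chebyshev.T ℝ (k : ℕ))) δ0 := by
    intro k
    have hT := Polynomial.Chebyshev.T_add_two ℝ (k : ℤ)
    have hc2 : (((k + 2 : ℕ) : ℤ)) = (k : ℤ) + 2 := by push_cast; ring
    have hc1 : (((k + 1 : ℕ) : ℤ)) = (k : ℤ) + 1 := by push_cast; ring
    rw [hc2, hc1, hT, map_sub, map_mul, map_mul, Polynomial.aeval_X, map_ofNat]
    rw [h2A]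
    simp [Module.End.mul_apply]
  -- the main induction
  have main : ∀ k : ℕ,
      (∀ z, (Polynomial.aeval A (Polynomial.Chebyshev.T ℝ (k : ℕ))) δ0 z
        = gfun p k (G.dist x0 z)) ∧
      (∀ z, (Polynomial.aeval A (Polynomial.Chebyshev.T ℝ ((k : ℕ) + 1 : ℕ))) δ0 z
        = gfun p (k + 1) (G.dist x0 z)) := by
    intro k
    induction k with
    | zero =>
      constructor
      · intro z
        have h0 : ((0 : ℕ) : ℤ) = 0 := rfl
        rw [h0, Polynomial.Chebyshev.T_zero, map_one]
        rw [hδ0, Module.End.one_apply, Finsupp.single_apply]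
        have hg : gfun p 0 (G.dist x0 z) = if G.dist x0 z = 0 then 1 else 0 := by
          rw [gfun, if_pos rfl]
        rw [hg]
        by_cases hz : z = x0
        · rw [if_pos hz.symm, if_pos ((hconn.dist_eq_zero_iff).2 hz.symm)]
        · rw [if_neg (fun h => hz h.symm),
            if_neg (fun h => hz (((hconn.dist_eq_zero_iff).1 h).symm))]
      · intro z
        have h1 : (((0 + 1 : ℕ)) : ℤ) = 1 := by norm_num
        rw [h1, Polynomial.Chebyshev.T_one, Polynomial.aeval_X]
        have hAz : A δ0 z = 2⁻¹ * (S δ0 z) := by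
          simp [hA]
        rw [hAz, hS δ0 z, hδ0]
        have hsum : ∑ y ∈ G.neighborFinset z, (Finsupp.single x0 (1:ℝ)) y
            = if x0 ∈ G.neighborFinset z then (1:ℝ) else 0 := by
          rw [← Finset.sum_ite_eq (G.neighborFinset z) x0 (fun _ => (1:ℝ))]
          apply Finset.sum_congr rfl
          intro y _
          rw [Finsupp.single_apply]
        rw [hsum]
        have hadj : x0 ∈ G.neighborFinset z ↔ G.dist x0 z = 1 := by
          rw [SimpleGraph.mem_neighborFinset, ← SimpleGraph.dist_eq_one_iff_adj,
            SimpleGraph.dist_comm]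
        by_cases hd : G.dist x0 z = 1
        · rw [if_pos (hadj.2 hd)]
          have hg : gfun p (0 + 1) (G.dist x0 z) = 1 / (2 * Real.sqrt p ^ 1) := by
            rw [hd, gfun, if_neg (by omega : ¬ (0 + 1 : ℕ) = 0),
              if_neg (by omega : ¬((1:ℕ) % 2 ≠ (0+1) % 2 ∨ 0 + 1 < 1)), if_pos rfl]
          rw [hg]
          rw [pow_one]
          field_simp
        · rw [if_neg (fun h => hd (hadj.1 h))]
          have hg : gfun p (0 + 1) (G.dist x0 z) = 0 := by
            rw [gfun, if_neg (by omega : ¬ (0 + 1 : ℕ) = 0), if_pos (by omega)]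
          rw [hg]; ring
    | succ m ih =>
      refine ⟨ih.2, ?_⟩
      intro z
      have hkey := DFunLike.congr_fun (key m) z
      have hm2 : m + 1 + 1 = m + 2 := by omega
      rw [hm2, hkey, Finsupp.sub_apply, hS]
      have hradial := radial_sum (p := p) htree hreg x0 z
        (fun y => (Polynomial.aeval A (Polynomial.Chebyshev.T ℝ ((m + 1 : ℕ)))) δ0 y)
        (gfun p (m + 1)) ih.2
      rw [hradial, ih.1 z, gfun_rec p hp m (G.dist x0 z)]
      by_cases hz : z = x0
      · rw [if_pos hz, if_pos ((hconn.dist_eq_zero_iff).2 hz.symm)]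
      · rw [if_neg hz, if_neg (fun h => hz (((hconn.dist_eq_zero_iff).1 h).symm))]
  -- conclusion
  have hx := (main n).1 x
  have hqn : Real.sqrt p ^ n = (p : ℝ) ^ (n / 2) := by
    obtain ⟨m, hm⟩ := hneven
    have hnm : n = 2 * m := by omega
    subst hnm
    rw [pow_mul, hq2]
    congr 1
    omega
  refine ⟨?_, ?_, ?_⟩
  · intro h
    rw [hx, gfun, if_neg (by omega : ¬ n = 0), if_pos]
    rcases h with h | h
    · left
      rw [Nat.odd_iff] at h
      rw [Nat.even_iff] at hneven
      omega
    · right; exact h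
  · rintro ⟨hlt, heven⟩
    rw [hx, gfun, if_neg (by omega : ¬ n = 0), if_neg, if_neg (by omega), hqn]
    rw [Nat.even_iff] at hneven heven
    omega
  · intro heq
    rw [hx, gfun, if_neg (by omega : ¬ n = 0), if_neg (by omega), if_pos heq, hqn]
end

section
/- Let $p \ge 2$ be an integer, let $\mathcal{T}$ be the $(p+1)$-regular tree with a base vertex $x_0$, let $T_p$ be the normalized adjacency operator $(T_p f)(x) = p^{-1/2}\sum_{y \sim x} f(y)$ on finitely supported real-valued functions, and let $\delta_0$ be the function equal to $1$ at $x_0$ and $0$ elsewhere. Then for every even $n \ge 2$ and every vertex $x$ one has $\bigl|P_n[\tfrac{1}{2}T_p]\,\delta_0(x)\bigr| \le \tfrac{p-1}{2}\, p^{-n/2}$. -/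
open SimpleGraph Polynomial Finset

namespace ChebTreeAux

variable {V : Type*} {G : SimpleGraph V}

lemma exists_shortest_path (hc : G.Connected) (u v : V) :
    ∃ w : G.Walk u v, w.IsPath ∧ w.length = G.dist u v := by
  classical
  obtain ⟨w, hw⟩ := (hc u v).exists_walk_length_eq_dist
  exact ⟨w.bypass, w.bypass_isPath,
    le_antisymm (hw ▸ w.length_bypass_le) (SimpleGraph.dist_le _)⟩

lemma notMem_of_shortest {u x y : V} {Q : G.Walk u y}
    (hl : Q.length = G.dist u y) (hxy : x ≠ y) (hd : G.dist u y ≤ G.dist u x) :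
    x ∉ Q.support := by
  classical
  intro hx
  have h1 := Q.take_spec hx
  have h2 : (Q.takeUntil x hx).length + (Q.dropUntil x hx).length = Q.length := by
    rw [← SimpleGraph.Walk.length_append, h1]
  have h3 : (Q.dropUntil x hx).length ≠ 0 := fun h =>
    hxy (SimpleGraph.Walk.eq_of_length_eq_zero h)
  have h4 : G.dist u x ≤ (Q.takeUntil x hx).length := SimpleGraph.dist_le _
  omega

lemma isPath_concat {u v w : V} {p : G.Walk u v} (hp : p.IsPath) (h : G.Adj v w)
    (hw : w ∉ p.support) : (p.concat h).IsPath := by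
  rw [← SimpleGraph.Walk.isPath_reverse_iff, SimpleGraph.Walk.reverse_concat]
  exact hp.reverse.cons (by simpa using hw)

lemma adj_dist_ne (ht : G.IsTree) (x0 : V) {x y : V} (hxy : G.Adj x y) :
    G.dist x0 x ≠ G.dist x0 y := by
  intro he
  obtain ⟨P, hP, hPl⟩ := exists_shortest_path ht.isConnected x0 x
  obtain ⟨Q, hQ, hQl⟩ := exists_shortest_path ht.isConnected x0 y
  have hx : x ∉ Q.support := notMem_of_shortest hQl hxy.ne (he ▸ le_rfl)
  have hQP : (Q.concat hxy.symm).IsPath := isPath_concat hQ hxy.symm hx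
  have heq := (ht.existsUnique_path x0 x).unique hP hQP
  apply_fun SimpleGraph.Walk.length at heq
  rw [hPl, SimpleGraph.Walk.length_concat, hQl, he] at heq
  omega

lemma adj_dist_step (ht : G.IsTree) (x0 : V) {x y : V} (hxy : G.Adj x y) :
    G.dist x0 y = G.dist x0 x + 1 ∨ G.dist x0 x = G.dist x0 y + 1 := by
  have h1 : G.dist x0 y ≤ G.dist x0 x + G.dist x y := ht.isConnected.dist_triangle
  have h2 : G.dist x0 x ≤ G.dist x0 y + G.dist y x := ht.isConnected.dist_triangle
  have hd1 : G.dist x y = 1 := SimpleGraph.dist_eq_one_iff_adj.mpr hxy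
  have hd2 : G.dist y x = 1 := SimpleGraph.dist_eq_one_iff_adj.mpr hxy.symm
  have := adj_dist_ne ht x0 hxy
  omega

lemma exists_lower (ht : G.IsTree) {x0 x : V} {k : ℕ} (hx : G.dist x0 x = k + 1) :
    ∃ y, G.Adj x y ∧ G.dist x0 y = k := by
  obtain ⟨P, hP, hPl⟩ := exists_shortest_path ht.isConnected x0 x
  have hne : x ≠ x0 := by
    rintro rfl
    rw [SimpleGraph.dist_self] at hx; omega
  obtain ⟨y, h, q, hq⟩ := SimpleGraph.Walk.exists_eq_cons_of_ne hne P.reverse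
  have hlen : q.length = k := by
    have := SimpleGraph.Walk.length_reverse P
    rw [hq] at this
    simp only [SimpleGraph.Walk.length_cons] at this
    omega
  have hub : G.dist x0 y ≤ k := by
    rw [SimpleGraph.dist_comm]
    exact hlen ▸ SimpleGraph.dist_le q
  rcases adj_dist_step ht x0 h with h' | h' <;> [skip; exact ⟨y, h, by omega⟩]
  omega

lemma lower_unique (ht : G.IsTree) {x0 x : V} {k : ℕ} {y1 y2 : V}
    (hx : G.dist x0 x = k + 1) (h1 : G.Adj x y1) (hd1 : G.dist x0 y1 = k)
    (h2 : G.Adj x y2) (hd2 : G.dist x0 y2 = k) : y1 = y2 := by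
  obtain ⟨Q1, hQ1, hQ1l⟩ := exists_shortest_path ht.isConnected x0 y1
  obtain ⟨Q2, hQ2, hQ2l⟩ := exists_shortest_path ht.isConnected x0 y2
  have hx1 : x ∉ Q1.support := notMem_of_shortest hQ1l h1.ne (by omega)
  have hx2 : x ∉ Q2.support := notMem_of_shortest hQ2l h2.ne (by omega)
  have c1 := isPath_concat hQ1 h1.symm hx1
  have c2 := isPath_concat hQ2 h2.symm hx2
  have heq := (ht.existsUnique_path x0 x).unique c1 c2
  obtain ⟨hv, -⟩ := SimpleGraph.Walk.concat_inj heq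
  exact hv

variable [∀ v : V, Fintype (G.neighborSet v)]

lemma sum_neighbors_zero {p : ℕ} (hreg : G.IsRegularOfDegree (p + 1)) (x0 : V)
    (h : ℕ → ℝ) :
    ∑ y ∈ G.neighborFinset x0, h (G.dist x0 y) = (p + 1 : ℕ) * h 1 := by
  rw [Finset.sum_congr rfl (fun y hy => ?_), Finset.sum_const, ← hreg x0,
    SimpleGraph.degree, nsmul_eq_mul]
  congr 1
  exact SimpleGraph.dist_eq_one_iff_adj.mpr ((G.mem_neighborFinset _ _).mp hy)

lemma sum_neighbors_pos {p : ℕ} (ht : G.IsTree) (hreg : G.IsRegularOfDegree (p + 1))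
    {x0 x : V} {k : ℕ} (hx : G.dist x0 x = k + 1) (h : ℕ → ℝ) :
    ∑ y ∈ G.neighborFinset x, h (G.dist x0 y) = h k + p * h (k + 2) := by
  classical
  obtain ⟨y0, hy0a, hy0d⟩ := exists_lower ht hx
  have hfilt : (G.neighborFinset x).filter (fun y => G.dist x0 y = k) = {y0} := by
    ext z
    simp only [Finset.mem_filter, SimpleGraph.mem_neighborFinset, Finset.mem_singleton]
    constructor
    · rintro ⟨hz, hzd⟩; exact lower_unique ht hx hz hzd hy0a hy0d
    · rintro rfl; exact ⟨hy0a, hy0d⟩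
  have hsplit := Finset.sum_filter_add_sum_filter_not (G.neighborFinset x)
    (fun y => G.dist x0 y = k) (fun y => h (G.dist x0 y))
  have hcard := Finset.card_filter_add_card_filter_not
    (s := G.neighborFinset x) (p := fun y => G.dist x0 y = k)
  rw [hfilt] at hsplit hcard
  have hdeg : (G.neighborFinset x).card = p + 1 := hreg x
  rw [hdeg] at hcard
  simp only [Finset.card_singleton] at hcard
  have hc2 : ((G.neighborFinset x).filter (fun y => ¬ G.dist x0 y = k)).card = p := by omega
  have hrest : ∑ y ∈ (G.neighborFinset x).filter (fun y => ¬ G.dist x0 y = k),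
      h (G.dist x0 y) = p * h (k + 2) := by
    rw [Finset.sum_congr rfl (fun y hy => ?_), Finset.sum_const, hc2, nsmul_eq_mul]
    · simp only [Finset.mem_filter, SimpleGraph.mem_neighborFinset] at hy
      obtain ⟨hadj, hne⟩ := hy
      rcases adj_dist_step ht x0 hadj with h' | h' <;> [skip; omega]
      congr 1; omega
  rw [Finset.sum_singleton, hy0d] at hsplit
  rw [← hsplit, hrest]


noncomputable def c (p n k : ℕ) : ℝ :=
  if k = n then (if n = 0 then 1 else 2⁻¹)
  else if k < n ∧ (n - k) % 2 = 0 then -(((p : ℝ) - 1) / 2) else 0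

set_option maxHeartbeats 2000000 in
lemma c_rec_pos (p n k : ℕ) :
    c p (n + 2) (k + 1)
      = c p (n + 1) k + p * c p (n + 1) (k + 2) - p * c p n (k + 1) := by
  unfold c
  split_ifs <;> first | (exfalso; first | omega | assumption) | ring

set_option maxHeartbeats 2000000 in
lemma c_rec_zero (p n : ℕ) :
    c p (n + 2) 0 = ((p : ℝ) + 1) * c p (n + 1) 1 - p * c p n 0 := by
  unfold c
  split_ifs <;> first | (exfalso; first | omega | assumption) | ring

lemma c_bound {p n : ℕ} (hp : 2 ≤ p) (hn : n ≠ 0) (k : ℕ) :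
    |c p n k| ≤ ((p : ℝ) - 1) / 2 := by
  have h2 : (2 : ℝ) ≤ p := by exact_mod_cast hp
  have hnn : (0:ℝ) ≤ ((p:ℝ)-1)/2 := by linarith
  unfold c
  split_ifs
  all_goals first
    | exact absurd ‹n = 0› hn
    | (rw [abs_of_nonneg (by norm_num : (0:ℝ) ≤ 2⁻¹)]; linarith)
    | (rw [abs_neg, abs_of_nonneg hnn])
    | (rw [abs_zero]; exact hnn)

end ChebTreeAux


open SimpleGraph Polynomial ChebTreeAux

/-- **Pointwise bound for wave propagation on the `(p+1)`-regular tree.**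
With `G` the `(p+1)`-regular tree with base vertex `x0`, `S = T_p` the normalized
adjacency operator, and `δ0` the delta function at `x0`, for every even `n ≥ 2` and
every vertex `x` one has `|P_n[½T_p]δ0(x)| ≤ ((p-1)/2) · p^{-n/2}`. -/
theorem chebyshev_propagation_bound_on_regular_tree
    {V : Type*} (p : ℕ) (hp : 2 ≤ p)
    (G : SimpleGraph V) [∀ v : V, Fintype (G.neighborSet v)]
    (htree : G.IsTree) (hreg : G.IsRegularOfDegree (p + 1))
    (x0 : V)
    (S : Module.End ℝ (V →₀ ℝ))
    (hS : ∀ (f : V →₀ ℝ) (x : V),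
      S f x = (Real.sqrt p)⁻¹ * ∑ y ∈ G.neighborFinset x, f y)
    (δ0 : V →₀ ℝ) (hδ0 : δ0 = Finsupp.single x0 1)
    (n : ℕ) (hn : 2 ≤ n) (hneven : Even n) (x : V) :
    |((Polynomial.aeval ((2⁻¹ : ℝ) • S)) (Polynomial.Chebyshev.T ℝ n)) δ0 x|
      ≤ (((p : ℝ) - 1) / 2) * ((p : ℝ) ^ (n / 2))⁻¹ := by
  classical
  have hconn := htree.isConnected
  have hppos : 0 < p := by omega
  have hp0 : (0 : ℝ) < p := by exact_mod_cast hppos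
  set q : ℝ := Real.sqrt p with hqdef
  have hq0 : 0 < q := Real.sqrt_pos.mpr hp0
  have hqne : q ≠ 0 := ne_of_gt hq0
  have hp' : (p : ℝ) = q ^ 2 := by
    rw [hqdef, sq, Real.mul_self_sqrt hp0.le]
  set A : Module.End ℝ (V →₀ ℝ) := (2⁻¹ : ℝ) • S with hA
  have h2S : (2 : Module.End ℝ (V →₀ ℝ)) * A = S := by
    have h21 : (2 : Module.End ℝ (V →₀ ℝ)) = (2 : ℝ) • 1 :=
      ((two_smul ℝ (1 : Module.End ℝ (V →₀ ℝ))).trans one_add_one_eq_two).symm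
    rw [hA, h21, smul_mul_assoc, one_mul, smul_smul]
    norm_num
  have key : ∀ m : ℕ,
      (∀ z, ((aeval A) (Chebyshev.T ℝ (m : ℤ))) δ0 z
        = (q ^ m)⁻¹ * c p m (G.dist x0 z))
      ∧ (∀ z, ((aeval A) (Chebyshev.T ℝ ((m + 1 : ℕ) : ℤ))) δ0 z
        = (q ^ (m + 1))⁻¹ * c p (m + 1) (G.dist x0 z)) := by
    intro m
    induction m with
    | zero =>
      constructor
      · intro z
        rw [Nat.cast_zero, Polynomial.Chebyshev.T_zero, map_one, Module.End.one_apply,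
          hδ0, Finsupp.single_apply]
        by_cases h : x0 = z
        · subst h
          simp [c, SimpleGraph.dist_self]
        · have hd : G.dist x0 z ≠ 0 := fun hh => h ((hconn.dist_eq_zero_iff).mp hh)
          simp only [if_neg h]
          rw [eq_comm]
          simp only [c, if_neg hd, mul_eq_zero]
          right
          rw [if_neg]
          omega
      · intro z
        rw [show ((0 + 1 : ℕ) : ℤ) = 1 by norm_num, Polynomial.Chebyshev.T_one, aeval_X,
          hA, LinearMap.smul_apply, Finsupp.smul_apply, smul_eq_mul, hS]
        have hsum : ∑ y ∈ G.neighborFinset z, δ0 y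
            = if G.dist x0 z = 1 then 1 else 0 := by
          rw [hδ0]
          have : ∀ y ∈ G.neighborFinset z, (Finsupp.single x0 (1:ℝ)) y
              = if x0 = y then 1 else 0 := fun y _ => Finsupp.single_apply
          rw [Finset.sum_congr rfl this, Finset.sum_ite_eq]
          congr 1
          simp only [SimpleGraph.mem_neighborFinset, eq_iff_iff]
          rw [← SimpleGraph.dist_eq_one_iff_adj, SimpleGraph.dist_comm]
        rw [hsum]
        by_cases hz : G.dist x0 z = 1
        · rw [if_pos hz, hz]
          simp [c, mul_comm]
        · rw [if_neg hz]
          have hc : c p (0 + 1) (G.dist x0 z) = 0 := by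
            unfold c
            rw [if_neg (by omega), if_neg (by omega)]
          rw [hc]
          ring
    | succ m ih =>
      refine ⟨ih.2, ?_⟩
      intro z
      have hcast : ((m + 1 + 1 : ℕ) : ℤ) = (m : ℤ) + 2 := by push_cast; ring
      rw [hcast, Polynomial.Chebyshev.T_add_two, map_sub, map_mul, map_mul, aeval_X,
        map_ofNat, h2S, show ((m : ℤ) + 1) = ((m + 1 : ℕ) : ℤ) by push_cast; ring,
        LinearMap.sub_apply, Finsupp.sub_apply, Module.End.mul_apply, hS]
      have hsc : ∑ y ∈ G.neighborFinset z, ((aeval A) (Chebyshev.T ℝ ((m + 1 : ℕ) : ℤ))) δ0 y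
          = ∑ y ∈ G.neighborFinset z, (q ^ (m + 1))⁻¹ * c p (m + 1) (G.dist x0 y) :=
        Finset.sum_congr rfl fun y _ => ih.2 y
      rw [hsc, ih.1 z]
      rcases hk : G.dist x0 z with _ | k
      · have hz : x0 = z := (hconn.dist_eq_zero_iff).mp hk
        subst hz
        have h1 : ∑ y ∈ G.neighborFinset x0, (q ^ (m + 1))⁻¹ * c p (m + 1) (G.dist x0 y)
            = (p + 1 : ℕ) * ((q ^ (m + 1))⁻¹ * c p (m + 1) 1) :=
          sum_neighbors_zero hreg x0 (fun t => (q ^ (m + 1))⁻¹ * c p (m + 1) t)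
        rw [h1, c_rec_zero p m]
        push_cast
        rw [hp']
        field_simp
        ring
      · have h1 : ∑ y ∈ G.neighborFinset z, (q ^ (m + 1))⁻¹ * c p (m + 1) (G.dist x0 y)
            = (q ^ (m + 1))⁻¹ * c p (m + 1) k
              + p * ((q ^ (m + 1))⁻¹ * c p (m + 1) (k + 2)) :=
          sum_neighbors_pos htree hreg hk (fun t => (q ^ (m + 1))⁻¹ * c p (m + 1) t)
        rw [h1, c_rec_pos p m k]
        rw [hp']
        field_simp
        ring
  have hkey := (key n).1 x
  rw [hkey]
  have hqn : q ^ n = (p : ℝ) ^ (n / 2) := by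
    obtain ⟨m, hm⟩ := hneven
    have h2 : (m + m) / 2 = m := by omega
    rw [hm, h2, ← two_mul, pow_mul, ← hp']
  rw [abs_mul, abs_of_nonneg (by positivity : (0:ℝ) ≤ (q ^ n)⁻¹), hqn]
  have hb := c_bound (p := p) (n := n) hp (by omega) (G.dist x0 x)
  calc ((p : ℝ) ^ (n / 2))⁻¹ * |c p n (G.dist x0 x)|
      ≤ ((p : ℝ) ^ (n / 2))⁻¹ * (((p : ℝ) - 1) / 2) := by
        apply mul_le_mul_of_nonneg_left hb (by positivity)
    _ = (((p : ℝ) - 1) / 2) * ((p : ℝ) ^ (n / 2))⁻¹ := mul_comm _ _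
end

section
/- Let $H$ be a complex Hilbert space, let $(\psi_i)_{i \in I}$ be a Hilbert basis of $H$, and let $K$ be a continuous linear operator on $H$ such that $K\psi_i = \mu_i \psi_i$ for real eigenvalues $\mu_i \ge -1$ for all $i \in I$. Let $0 < \eta < 1$, and suppose $i_0 \in I$ is an index with $\mu_{i_0} > \eta^{-1}$. If $f \in H$ satisfies $\langle f, \psi_{i_0}\rangle = \|f\|^2$ and $\|f\|^2 > \eta$, then $\mathrm{Re}\,\langle K f, f\rangle > \eta^2$. -/
open scoped InnerProductSpace

/-- **Spectral lower bound for the correlation `⟨Kf, f⟩`.**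
Let `H` be a complex Hilbert space, `(ψᵢ)` a Hilbert basis of `H`, and `K` a continuous
linear operator with `Kψᵢ = μᵢψᵢ` for real eigenvalues `μᵢ ≥ -1`.  Let `0 < η < 1` and
suppose `μ_{i₀} > η⁻¹` for some index `i₀`.  If `f ∈ H` satisfies `⟨f, ψ_{i₀}⟩ = ‖f‖²`
and `‖f‖² > η`, then `Re⟨Kf, f⟩ > η²`. -/
theorem spectral_correlation_lower_bound
    {H : Type*} [NormedAddCommGroup H] [InnerProductSpace ℂ H] [CompleteSpace H]
    {I : Type*} (ψ : HilbertBasis I ℂ H)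
    (K : H →L[ℂ] H) (μ : I → ℝ)
    (hμ : ∀ i : I, (-1 : ℝ) ≤ μ i)
    (hK : ∀ i : I, K (ψ i) = (μ i : ℂ) • ψ i)
    (η : ℝ) (hη0 : 0 < η) (hη1 : η < 1)
    (i0 : I) (hi0 : η⁻¹ < μ i0)
    (f : H) (hf : ⟪f, ψ i0⟫_ℂ = (‖f‖ ^ 2 : ℝ)) (hfn : η < ‖f‖ ^ 2) :
    η ^ 2 < (⟪K f, f⟫_ℂ).re := by
  set t : ℝ := ‖f‖ ^ 2 with ht
  have hterm : ∀ i : I, Complex.reCLM (innerSL ℂ f (K ((ψ.repr f i) • ψ i)))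
      = μ i * ‖⟪f, ψ i⟫_ℂ‖ ^ 2 := by
    intro i
    rw [innerSL_apply_apply, map_smul, hK i, ψ.repr_apply_apply, inner_smul_right, inner_smul_right,
      ← inner_conj_symm (ψ i) f]
    have : (starRingEnd ℂ) ⟪f, ψ i⟫_ℂ * ((μ i : ℂ) * ⟪f, ψ i⟫_ℂ)
        = (μ i : ℂ) * (⟪f, ψ i⟫_ℂ * (starRingEnd ℂ) ⟪f, ψ i⟫_ℂ) := by ring
    rw [this, Complex.mul_conj]
    simp [Complex.normSq_eq_norm_sq, ← Complex.ofReal_pow]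
  have h1 : HasSum (fun i => μ i * ‖⟪f, ψ i⟫_ℂ‖ ^ 2) ((⟪f, K f⟫_ℂ).re) := by
    have hs : HasSum (fun i => Complex.reCLM (innerSL ℂ f (K ((ψ.repr f i) • ψ i))))
        (Complex.reCLM (innerSL ℂ f (K f))) :=
      (((ψ.hasSum_repr f).mapL K).mapL (innerSL ℂ f)).mapL Complex.reCLM
    simp only [hterm] at hs
    simpa using hs
  have h2 : HasSum (fun i => ‖⟪f, ψ i⟫_ℂ‖ ^ 2) t := by
    have hs := (ψ.hasSum_inner_mul_inner f f).mapL Complex.reCLM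
    have hterm2 : ∀ i : I, Complex.reCLM (⟪f, ψ i⟫_ℂ * ⟪ψ i, f⟫_ℂ) = ‖⟪f, ψ i⟫_ℂ‖ ^ 2 := by
      intro i
      rw [← inner_conj_symm (ψ i) f, Complex.mul_conj]
      simp [Complex.normSq_eq_norm_sq, ← Complex.ofReal_pow]
    simp only [hterm2] at hs
    have h0 : Complex.reCLM ⟪f, f⟫_ℂ = t := by
      rw [ht]
      simp only [Complex.reCLM_apply]
      rw [@inner_self_eq_norm_sq_to_K ℂ]
      norm_cast
    rwa [h0] at hs
  have h3 : HasSum (fun i => (μ i + 1) * ‖⟪f, ψ i⟫_ℂ‖ ^ 2) ((⟪f, K f⟫_ℂ).re + t) := by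
    have h3' := h1.add h2
    have heq : (fun i => μ i * ‖⟪f, ψ i⟫_ℂ‖ ^ 2 + ‖⟪f, ψ i⟫_ℂ‖ ^ 2)
        = fun i => (μ i + 1) * ‖⟪f, ψ i⟫_ℂ‖ ^ 2 := by funext i; ring
    rwa [heq] at h3'
  have hle : (μ i0 + 1) * ‖⟪f, ψ i0⟫_ℂ‖ ^ 2 ≤ (⟪f, K f⟫_ℂ).re + t :=
    le_hasSum h3 i0 (fun i _ => mul_nonneg (by linarith [hμ i]) (sq_nonneg _))
  have hnorm : ‖⟪f, ψ i0⟫_ℂ‖ ^ 2 = t ^ 2 := by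
    rw [hf]
    simp [Complex.norm_real, Real.norm_eq_abs, sq_abs]
  rw [hnorm] at hle
  have hre : (⟪K f, f⟫_ℂ).re = (⟪f, K f⟫_ℂ).re := by
    rw [← inner_conj_symm f (K f), Complex.conj_re]
  rw [hre]
  have htpos : 0 < t := lt_trans hη0 hfn
  -- key algebraic identity
  have key : η * ((η⁻¹ + 1) * t ^ 2 - t - η ^ 2) = (t - η) * (t + η * t + η ^ 2) := by
    field_simp
    ring
  have hpos : 0 < (t - η) * (t + η * t + η ^ 2) := by
    apply mul_pos (by linarith)
    nlinarith
  have h4 : 0 < (η⁻¹ + 1) * t ^ 2 - t - η ^ 2 := by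
    nlinarith [key, hpos]
  have h5 : (η⁻¹ + 1) * t ^ 2 < (μ i0 + 1) * t ^ 2 := by
    apply mul_lt_mul_of_pos_right (by linarith) (by positivity)
  linarith
end
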